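/- Let n ≥ 2 and m ≥ 0 be integers and R > 0. Let U : ℝ × ℝ → ℝ be infinitely differentiable and satisfy, for all s ∈ (0,R] and r ∈ (0,∞): ∂_s²U(s,r) + (n−1)·coth(s)·∂_sU(s,r) − (m(m+n−2)/sinh²(s))·U(s,r) = ∂_r²U(s,r) + (n−1)·coth(r)·∂_rU(s,r). Suppose that the function g(r) = U(R,r) satisfies g^{(k)}(0) = 0 for every integer k ≥ 0. Let F(s) = U(s,0). Then (𝒟_m^{∘l} F)(R) = 0 for every integer l ≥ 0, where 𝒟_m^{∘l} is the l-fold composition of the operator (𝒟_m f)(s) = f''(s) + (n−1)·coth(s)·f'(s) − (m(m+n−2)/sinh²(s))·f(s). -/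

import Mathlib

/-- The second-order operator `𝒟_k f (s) = f''(s) + (n-1)·coth(s)·f'(s)
    - (k(k+n-2)/sinh²(s))·f(s)`. -/
noncomputable def Dop (n k : ℤ) (f : ℝ → ℝ) : ℝ → ℝ := fun s =>
  deriv (deriv f) s + ((n : ℝ) - 1) * (Real.cosh s / Real.sinh s) * deriv f s
    - ((k : ℝ) * ((k : ℝ) + (n : ℝ) - 2) / (Real.sinh s) ^ 2) * f s

open Real Set Polynomial Filter


open intervalIntegral in

lemma flat_bound : ∀ (N : ℕ) (h : ℝ → ℝ), ContDiff ℝ (⊤:ℕ∞) h →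
    (∀ j, iteratedDeriv j h 0 = 0) →
    ∃ C : ℝ, 0 ≤ C ∧ ∀ r ∈ Icc (0:ℝ) 1, |h r| ≤ C * r ^ N := by
  intro N
  induction N with
  | zero =>
    intro h hh h0
    obtain ⟨C, hC⟩ := isCompact_Icc.exists_bound_of_continuousOn
      (s := Icc (0:ℝ) 1) hh.continuous.continuousOn
    refine ⟨max C 0, le_max_right _ _, fun r hr => ?_⟩
    simp only [pow_zero, mul_one]
    exact (hC r hr).trans (le_max_left _ _)
  | succ N ih =>
    intro h hh h0
    have hd : ContDiff ℝ (⊤:ℕ∞) (deriv h) := (contDiff_infty_iff_deriv.mp hh).2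
    have hd0 : ∀ j, iteratedDeriv j (deriv h) 0 = 0 := by
      intro j; rw [← iteratedDeriv_succ']; exact h0 (j+1)
    obtain ⟨C, hC0, hC⟩ := ih (deriv h) hd hd0
    refine ⟨C, hC0, fun r hr => ?_⟩
    have h00 : h 0 = 0 := by simpa using h0 0
    have hfr : h r = ∫ t in (0:ℝ)..r, deriv h t := by
      rw [intervalIntegral.integral_deriv_eq_sub (fun x _ => hh.differentiable (by simp) x)
        (hd.continuous.intervalIntegrable _ _), h00, sub_zero]
    have hIle : ∀ t ∈ Set.uIoc (0:ℝ) r, ‖deriv h t‖ ≤ C * t ^ N := by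
      intro t ht
      rw [uIoc_of_le hr.1] at ht
      exact hC t ⟨ht.1.le, ht.2.trans hr.2⟩
    have := intervalIntegral.norm_integral_le_of_norm_le (g := fun t => C * t ^ N)
      (μ := MeasureTheory.volume) (a := 0) (b := r) hr.1
      (Filter.Eventually.of_forall fun t ht => hIle t (by rw [uIoc_of_le hr.1]; exact ht))
      (((continuous_const.mul (continuous_pow N)).intervalIntegrable _ _))
    rw [hfr]
    refine le_trans (this.trans (le_abs_self _)) ?_
    rw [intervalIntegral.integral_const_mul, integral_pow]
    have : C * ((r ^ (N + 1) - 0 ^ (N + 1)) / (N + 1)) ≤ C * r ^ (N+1) := by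
      rw [zero_pow (Nat.succ_ne_zero N), sub_zero]
      have h1 : (1:ℝ) ≤ (N:ℝ) + 1 := by
        have : (0:ℝ) ≤ (N:ℝ) := Nat.cast_nonneg N
        linarith
      have : r ^ (N+1) / ((N:ℝ)+1) ≤ r ^ (N+1) := by
        apply div_le_self (pow_nonneg hr.1 _) h1
      nlinarith [pow_nonneg hr.1 (N+1)]
    calc |C * ((r ^ (N + 1) - 0 ^ (N + 1)) / (↑N + 1))| 
        = C * ((r ^ (N + 1) - 0 ^ (N + 1)) / (↑N + 1)) := by
          rw [abs_of_nonneg]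
          rw [zero_pow (Nat.succ_ne_zero N), sub_zero]
          have h1 : (0:ℝ) < (N:ℝ) + 1 := by
            have : (0:ℝ) ≤ (N:ℝ) := Nat.cast_nonneg N
            linarith
          exact mul_nonneg hC0 (div_nonneg (pow_nonneg hr.1 _) h1.le)
      _ ≤ _ := this


lemma coth_ge_one {r : ℝ} (hr : 0 < r) : 1 ≤ Real.cosh r / Real.sinh r := by
  rw [le_div_iff₀ (Real.sinh_pos_iff.mpr hr), one_mul]
  nlinarith [Real.cosh_sub_sinh r, Real.exp_pos (-r)]

lemma coth_le {r : ℝ} (hr : 0 < r) (hr1 : r ≤ 1) : Real.cosh r / Real.sinh r ≤ 2 / r := by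
  have hs : r ≤ Real.sinh r := Real.self_le_sinh_iff.mpr (le_of_lt hr)
  have hc : Real.cosh r ≤ 2 := by
    have h1 : Real.cosh r ≤ Real.cosh 1 := by
      rw [Real.cosh_le_cosh]; rw [abs_of_pos hr, abs_of_pos one_pos]; exact hr1
    have : Real.cosh 1 < 2 := by
      rw [Real.cosh_eq]
      have he : Real.exp 1 < 2.7182818286 := Real.exp_one_lt_d9
      have he2 : Real.exp (-1) < 1 := by
        rw [Real.exp_lt_one_iff]; norm_num
      linarith
    linarith
  have hsp : 0 < Real.sinh r := Real.sinh_pos_iff.mpr hr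
  rw [div_le_div_iff₀ hsp hr]
  nlinarith
lemma poly_bound (P : Polynomial ℝ) : ∃ C : ℝ, 0 ≤ C ∧ ∀ x : ℝ, 1 ≤ x →
    |P.eval x| ≤ C * x ^ P.natDegree := by
  refine ⟨∑ i ∈ Finset.range (P.natDegree + 1), |P.coeff i|,
    Finset.sum_nonneg fun _ _ => abs_nonneg _, fun x hx => ?_⟩
  rw [P.eval_eq_sum_range, Finset.sum_mul]
  refine (Finset.abs_sum_le_sum_abs _ _).trans (Finset.sum_le_sum fun i hi => ?_)
  rw [abs_mul, abs_pow, abs_of_nonneg (by linarith : (0:ℝ) ≤ x)]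
  exact mul_le_mul_of_nonneg_left
    (pow_le_pow_right₀ hx (Nat.lt_succ_iff.mp (Finset.mem_range.mp hi))) (abs_nonneg _)

/-- coth derivative -/
lemma hasDerivAt_coth {r : ℝ} (hr : 0 < r) :
    HasDerivAt (fun x => Real.cosh x / Real.sinh x)
      (1 - (Real.cosh r / Real.sinh r) ^ 2) r := by
  have hs : Real.sinh r ≠ 0 := ne_of_gt (Real.sinh_pos_iff.mpr hr)
  have h : HasDerivAt (fun x => Real.cosh x / Real.sinh x) _ r := (Real.hasDerivAt_cosh r).div (Real.hasDerivAt_sinh r) hs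
  convert h using 1
  have := Real.cosh_sq_sub_sinh_sq r
  field_simp


noncomputable def SF (g : ℝ → ℝ) (K : ℕ) (c : ℕ → Polynomial ℝ) (r : ℝ) : ℝ :=
  ∑ k ∈ Finset.range K, (c k).eval (Real.cosh r / Real.sinh r) * deriv^[k] g r

noncomputable def pstep (c : ℕ → Polynomial ℝ) : ℕ → Polynomial ℝ := fun k =>
  (c k).derivative * (1 - Polynomial.X ^ 2) + (if k = 0 then 0 else c (k - 1))

lemma pstep_vanish {c : ℕ → Polynomial ℝ} {K : ℕ} (hc : ∀ k, K ≤ k → c k = 0) :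
    ∀ k, K + 1 ≤ k → pstep c k = 0 := by
  intro k hk
  have h1 : c k = 0 := hc k (by omega)
  have h2 : (if k = 0 then (0:Polynomial ℝ) else c (k-1)) = 0 := by
    rw [if_neg (by omega)]
    exact hc (k-1) (by omega)
  simp [pstep, h1, h2]

lemma hasDerivAt_SF {g : ℝ → ℝ} (hg : ContDiff ℝ (⊤:ℕ∞) g) {K : ℕ}
    {c : ℕ → Polynomial ℝ} (hc : ∀ k, K ≤ k → c k = 0) {r : ℝ} (hr : 0 < r) :
    HasDerivAt (SF g K c) (SF g (K + 1) (pstep c) r) r := by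
  set y := Real.cosh r / Real.sinh r with hy
  have hterm : ∀ k, HasDerivAt (fun x => (c k).eval (Real.cosh x / Real.sinh x) * deriv^[k] g x)
      ((c k).derivative.eval y * (1 - y ^ 2) * deriv^[k] g r
        + (c k).eval y * deriv^[k+1] g r) r := by
    intro k
    have h1 : HasDerivAt (fun x => (c k).eval (Real.cosh x / Real.sinh x))
        ((c k).derivative.eval y * (1 - y ^ 2)) r :=
      (Polynomial.hasDerivAt (c k) _).comp r (hasDerivAt_coth hr)
    have h2 : HasDerivAt (deriv^[k] g) (deriv^[k+1] g r) r := by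
      have hdk : ContDiff ℝ (⊤:ℕ∞) (deriv^[k] g) := hg.iterate_deriv k
      have := (hdk.differentiable (by simp) r).hasDerivAt
      rwa [← Function.iterate_succ_apply' deriv k g] at this
    exact h1.mul h2
  have hsum : HasDerivAt (SF g K c)
      (∑ k ∈ Finset.range K, ((c k).derivative.eval y * (1 - y ^ 2) * deriv^[k] g r
        + (c k).eval y * deriv^[k+1] g r)) r := HasDerivAt.fun_sum (fun k _ => hterm k)
  convert hsum using 1
  rw [SF]
  have hsplit : ∀ k ∈ Finset.range (K+1),
      (pstep c k).eval y * deriv^[k] g r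
      = (c k).derivative.eval y * (1 - y^2) * deriv^[k] g r
        + (if k = 0 then (0:Polynomial ℝ) else c (k-1)).eval y * deriv^[k] g r := by
    intro k _
    rw [pstep]
    simp [add_mul]
  rw [Finset.sum_congr rfl hsplit, Finset.sum_add_distrib]
  rw [Finset.sum_add_distrib]
  congr 1
  · rw [Finset.sum_range_succ, hc K le_rfl]
    simp
  · rw [Finset.sum_range_succ']
    simp [Function.iterate_succ_apply]

lemma SF_congr_deriv {g F : ℝ → ℝ} (hg : ContDiff ℝ (⊤:ℕ∞) g) {K : ℕ}
    {c : ℕ → Polynomial ℝ} (hc : ∀ k, K ≤ k → c k = 0)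
    (hF : ∀ r ∈ Ioi (0:ℝ), F r = SF g K c r) :
    ∀ r ∈ Ioi (0:ℝ), deriv F r = SF g (K+1) (pstep c) r := by
  intro r hr
  have hev : F =ᶠ[nhds r] SF g K c :=
    Filter.eventuallyEq_of_mem (isOpen_Ioi.mem_nhds hr) hF
  rw [hev.deriv_eq]
  exact (hasDerivAt_SF hg hc hr).deriv

/-- representation of Dop-iterates -/
lemma rep_Dop (n : ℤ) {g : ℝ → ℝ} (hg : ContDiff ℝ (⊤:ℕ∞) g) (l : ℕ) :
    ∃ (K : ℕ) (c : ℕ → Polynomial ℝ), (∀ k, K ≤ k → c k = 0) ∧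
      ∀ r ∈ Ioi (0:ℝ), (Dop n 0)^[l] g r = SF g K c r := by
  induction l with
  | zero =>
    refine ⟨1, fun k => if k = 0 then 1 else 0, fun k hk => if_neg (by omega), fun r _ => ?_⟩
    simp [SF]
  | succ l ih =>
    obtain ⟨K, c, hc, hrep⟩ := ih
    set F := (Dop n 0)^[l] g with hF
    have h1 : ∀ r ∈ Ioi (0:ℝ), deriv F r = SF g (K+1) (pstep c) r :=
      SF_congr_deriv hg hc hrep
    have h2 : ∀ r ∈ Ioi (0:ℝ), deriv (deriv F) r = SF g (K+2) (pstep (pstep c)) r :=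
      SF_congr_deriv hg (pstep_vanish hc) h1
    refine ⟨K + 2, fun k => pstep (pstep c) k
        + Polynomial.C ((n:ℝ) - 1) * Polynomial.X * pstep c k, ?_, ?_⟩
    · intro k hk
      simp only
      rw [pstep_vanish (pstep_vanish hc) k hk, pstep_vanish hc k (by omega)]
      simp
    · intro r hr
      rw [Function.iterate_succ_apply', ← hF]
      show Dop n 0 F r = _
      rw [Dop]
      have hz : ((0:ℤ) : ℝ) * (((0:ℤ):ℝ) + (n:ℝ) - 2) / Real.sinh r ^ 2 * F r = 0 := by
        norm_num
      rw [hz, sub_zero, h1 r hr, h2 r hr]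
      rw [SF, SF, SF]
      have hterm : ∀ k ∈ Finset.range (K+2),
          ((pstep (pstep c) k + Polynomial.C ((n:ℝ)-1) * Polynomial.X * pstep c k).eval
            (Real.cosh r / Real.sinh r)) * deriv^[k] g r
          = (pstep (pstep c) k).eval (Real.cosh r / Real.sinh r) * deriv^[k] g r
            + ((n:ℝ)-1) * (Real.cosh r / Real.sinh r)
              * ((pstep c k).eval (Real.cosh r / Real.sinh r) * deriv^[k] g r) := by
        intro k _
        simp only [Polynomial.eval_add, Polynomial.eval_mul, Polynomial.eval_C,
          Polynomial.eval_X]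
        ring
      rw [Finset.sum_congr rfl hterm, Finset.sum_add_distrib, ← Finset.mul_sum]
      congr 1
      conv_rhs => rw [show K+2 = (K+1)+1 from rfl, Finset.sum_range_succ]
      rw [pstep_vanish hc (K+1) le_rfl]
      simp

lemma tendsto_term {g : ℝ → ℝ} (hg : ContDiff ℝ (⊤:ℕ∞) g)
    (h0 : ∀ j, iteratedDeriv j g 0 = 0) (P : Polynomial ℝ) (k : ℕ) :
    Filter.Tendsto (fun r => P.eval (Real.cosh r / Real.sinh r) * deriv^[k] g r)
      (nhdsWithin 0 (Ioi 0)) (nhds 0) := by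
  obtain ⟨C₁, hC₁0, hC₁⟩ := poly_bound P
  set d := P.natDegree with hd
  have hk0 : ∀ j, iteratedDeriv j (deriv^[k] g) 0 = 0 := by
    intro j
    rw [iteratedDeriv_eq_iterate, ← Function.iterate_add_apply,
      ← iteratedDeriv_eq_iterate]
    exact h0 (j + k)
  obtain ⟨C₂, hC₂0, hC₂⟩ := flat_bound (d+1) (deriv^[k] g) (hg.iterate_deriv k) hk0
  have hbound : ∀ᶠ r in nhdsWithin 0 (Ioi 0),
      ‖P.eval (Real.cosh r / Real.sinh r) * deriv^[k] g r‖ ≤ (C₁ * 2^d * C₂) * r := by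
    filter_upwards [Ioc_mem_nhdsGT (by norm_num : (0:ℝ) < 1)]
      with r hr
    obtain ⟨hr0, hr1⟩ := hr
    have hcoth1 : (1:ℝ) ≤ Real.cosh r / Real.sinh r := coth_ge_one hr0
    have h1 : |P.eval (Real.cosh r / Real.sinh r)| ≤ C₁ * (2/r)^d := by
      refine (hC₁ _ hcoth1).trans ?_
      refine mul_le_mul_of_nonneg_left ?_ hC₁0
      exact pow_le_pow_left₀ (by linarith) (coth_le hr0 hr1) d
    have h2 : |deriv^[k] g r| ≤ C₂ * r^(d+1) := hC₂ r ⟨hr0.le, hr1⟩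
    rw [Real.norm_eq_abs, abs_mul]
    have hle := mul_le_mul h1 h2 (abs_nonneg _) (by positivity)
    refine hle.trans (le_of_eq ?_)
    have hrne : r ≠ 0 := ne_of_gt hr0
    rw [div_pow, pow_succ]
    field_simp
  have hlin : Filter.Tendsto (fun r : ℝ => (C₁ * 2^d * C₂) * r)
      (nhdsWithin 0 (Ioi 0)) (nhds 0) := by
    have h := ((continuous_const.fun_mul continuous_id).tendsto (0:ℝ) :
      Filter.Tendsto (fun r : ℝ => (C₁ * 2^d * C₂) * r) (nhds 0) _)
    simp only [mul_zero, id_eq] at h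
    exact h.mono_left nhdsWithin_le_nhds
  exact squeeze_zero_norm' hbound hlin

lemma rside (n : ℤ) {g : ℝ → ℝ} (hg : ContDiff ℝ (⊤:ℕ∞) g)
    (h0 : ∀ j, iteratedDeriv j g 0 = 0) (l : ℕ) :
    Filter.Tendsto ((Dop n 0)^[l] g) (nhdsWithin 0 (Ioi 0)) (nhds 0) := by
  obtain ⟨K, c, hc, hrep⟩ := rep_Dop n hg l
  have hSF : Filter.Tendsto (SF g K c) (nhdsWithin 0 (Ioi 0)) (nhds 0) := by
    have := tendsto_finset_sum (Finset.range K)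
      (fun k _ => tendsto_term hg h0 (c k) k)
    unfold SF
    simpa [SF, Finset.sum_const_zero] using this
  refine hSF.congr' ?_
  filter_upwards [self_mem_nhdsWithin] with r hr
  exact (hrep r hr).symm

noncomputable def Ps (W : ℝ × ℝ → ℝ) : ℝ × ℝ → ℝ := fun p => fderiv ℝ W p (1, 0)
noncomputable def Pr (W : ℝ × ℝ → ℝ) : ℝ × ℝ → ℝ := fun p => fderiv ℝ W p (0, 1)

lemma diffAt {F : Type*} [NormedAddCommGroup F] [NormedSpace ℝ F]
    {Ω : Set (ℝ×ℝ)} {W : ℝ×ℝ→F} (hΩ : IsOpen Ω)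
    (hW : ContDiffOn ℝ (⊤:ℕ∞) W Ω) {p : ℝ×ℝ} (hp : p ∈ Ω) :
    DifferentiableAt ℝ W p :=
  ((hW.differentiableOn (by simp)).differentiableAt (hΩ.mem_nhds hp))

lemma contDiffOn_Ps {Ω : Set (ℝ×ℝ)} {W : ℝ×ℝ→ℝ} (hΩ : IsOpen Ω)
    (hW : ContDiffOn ℝ (⊤:ℕ∞) W Ω) : ContDiffOn ℝ (⊤:ℕ∞) (Ps W) Ω := by
  have h := hW.fderiv_of_isOpen hΩ (m := (⊤:ℕ∞)) (by norm_cast)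
  exact h.clm_apply contDiffOn_const

lemma contDiffOn_Pr {Ω : Set (ℝ×ℝ)} {W : ℝ×ℝ→ℝ} (hΩ : IsOpen Ω)
    (hW : ContDiffOn ℝ (⊤:ℕ∞) W Ω) : ContDiffOn ℝ (⊤:ℕ∞) (Pr W) Ω := by
  have h := hW.fderiv_of_isOpen hΩ (m := (⊤:ℕ∞)) (by norm_cast)
  exact h.clm_apply contDiffOn_const

lemma hasDerivAt_slice1 {W : ℝ×ℝ→ℝ} {p : ℝ×ℝ} (h : DifferentiableAt ℝ W p) :
    HasDerivAt (fun σ => W (σ, p.2)) (Ps W p) p.1 := by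
  have h2 : HasDerivAt (fun σ : ℝ => (σ, p.2)) ((1:ℝ), (0:ℝ)) p.1 :=
    (hasDerivAt_id p.1).prodMk (hasDerivAt_const p.1 p.2)
  exact h.hasFDerivAt.comp_hasDerivAt p.1 h2

lemma hasDerivAt_slice2 {W : ℝ×ℝ→ℝ} {p : ℝ×ℝ} (h : DifferentiableAt ℝ W p) :
    HasDerivAt (fun ρ => W (p.1, ρ)) (Pr W p) p.2 := by
  have h2 : HasDerivAt (fun ρ : ℝ => (p.1, ρ)) ((0:ℝ), (1:ℝ)) p.2 :=
    (hasDerivAt_const p.2 p.1).prodMk (hasDerivAt_id p.2)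
  exact h.hasFDerivAt.comp_hasDerivAt p.2 h2

lemma deriv_slice1 {Ω : Set (ℝ×ℝ)} {W : ℝ×ℝ→ℝ} (hΩ : IsOpen Ω)
    (hW : ContDiffOn ℝ (⊤:ℕ∞) W Ω) {p : ℝ×ℝ} (hp : p ∈ Ω) :
    deriv (fun σ => W (σ, p.2)) p.1 = Ps W p :=
  (hasDerivAt_slice1 (diffAt hΩ hW hp)).deriv

lemma deriv_slice2 {Ω : Set (ℝ×ℝ)} {W : ℝ×ℝ→ℝ} (hΩ : IsOpen Ω)
    (hW : ContDiffOn ℝ (⊤:ℕ∞) W Ω) {p : ℝ×ℝ} (hp : p ∈ Ω) :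
    deriv (fun ρ => W (p.1, ρ)) p.2 = Pr W p :=
  (hasDerivAt_slice2 (diffAt hΩ hW hp)).deriv

lemma deriv2_slice1 {Ω : Set (ℝ×ℝ)} {W : ℝ×ℝ→ℝ} (hΩ : IsOpen Ω)
    (hW : ContDiffOn ℝ (⊤:ℕ∞) W Ω) {p : ℝ×ℝ} (hp : p ∈ Ω) :
    deriv (deriv (fun σ => W (σ, p.2))) p.1 = Ps (Ps W) p := by
  have hopen : IsOpen {σ : ℝ | (σ, p.2) ∈ Ω} :=
    hΩ.preimage (continuous_id.prodMk continuous_const)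
  have hev : deriv (fun σ' => W (σ', p.2)) =ᶠ[nhds p.1] (fun σ => Ps W (σ, p.2)) := by
    filter_upwards [hopen.mem_nhds (by simpa using hp)] with σ hσ
    exact deriv_slice1 hΩ hW hσ
  rw [hev.deriv_eq]
  exact deriv_slice1 hΩ (contDiffOn_Ps hΩ hW) hp

lemma deriv2_slice2 {Ω : Set (ℝ×ℝ)} {W : ℝ×ℝ→ℝ} (hΩ : IsOpen Ω)
    (hW : ContDiffOn ℝ (⊤:ℕ∞) W Ω) {p : ℝ×ℝ} (hp : p ∈ Ω) :
    deriv (deriv (fun ρ => W (p.1, ρ))) p.2 = Pr (Pr W) p := by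
  have hopen : IsOpen {ρ : ℝ | (p.1, ρ) ∈ Ω} :=
    hΩ.preimage (continuous_const.prodMk continuous_id)
  have hev : deriv (fun ρ' => W (p.1, ρ')) =ᶠ[nhds p.2] (fun ρ => Pr W (p.1, ρ)) := by
    filter_upwards [hopen.mem_nhds (by simpa using hp)] with ρ hρ
    exact deriv_slice2 hΩ hW hρ
  rw [hev.deriv_eq]
  exact deriv_slice2 hΩ (contDiffOn_Pr hΩ hW) hp

lemma Ps_congr {Ω : Set (ℝ×ℝ)} {V W : ℝ×ℝ→ℝ} (hΩ : IsOpen Ω)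
    (h : ∀ q ∈ Ω, V q = W q) {p : ℝ×ℝ} (hp : p ∈ Ω) : Ps V p = Ps W p := by
  unfold Ps
  rw [Filter.EventuallyEq.fderiv_eq (Filter.eventuallyEq_of_mem (hΩ.mem_nhds hp) h)]

lemma Pr_congr {Ω : Set (ℝ×ℝ)} {V W : ℝ×ℝ→ℝ} (hΩ : IsOpen Ω)
    (h : ∀ q ∈ Ω, V q = W q) {p : ℝ×ℝ} (hp : p ∈ Ω) : Pr V p = Pr W p := by
  unfold Pr
  rw [Filter.EventuallyEq.fderiv_eq (Filter.eventuallyEq_of_mem (hΩ.mem_nhds hp) h)]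

lemma Ps_Pr_symm {Ω : Set (ℝ×ℝ)} {W : ℝ×ℝ→ℝ} (hΩ : IsOpen Ω)
    (hW : ContDiffOn ℝ (⊤:ℕ∞) W Ω) {p : ℝ×ℝ} (hp : p ∈ Ω) :
    Ps (Pr W) p = Pr (Ps W) p := by
  have hfd : ContDiffOn ℝ (⊤:ℕ∞) (fderiv ℝ W) Ω :=
    hW.fderiv_of_isOpen hΩ (m := (⊤:ℕ∞)) (by norm_cast)
  have hd : DifferentiableAt ℝ (fderiv ℝ W) p := diffAt hΩ hfd hp
  have hsymm : ∀ v w, fderiv ℝ (fderiv ℝ W) p v w = fderiv ℝ (fderiv ℝ W) p w v := by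
    have hc : ContDiffAt ℝ (⊤:ℕ∞) W p := hW.contDiffAt (hΩ.mem_nhds hp)
    exact hc.isSymmSndFDerivAt (by
      simp; exact WithTop.coe_le_coe.mpr (le_top : (2:ℕ∞) ≤ ⊤))
  have e1 : Ps (Pr W) p = fderiv ℝ (fderiv ℝ W) p (1, 0) (0, 1) := by
    show fderiv ℝ (fun q => fderiv ℝ W q ((0:ℝ), (1:ℝ))) p (1, 0) = _
    rw [fderiv_clm_apply hd (differentiableAt_const _)]
    simp
  have e2 : Pr (Ps W) p = fderiv ℝ (fderiv ℝ W) p (0, 1) (1, 0) := by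
    show fderiv ℝ (fun q => fderiv ℝ W q ((1:ℝ), (0:ℝ))) p (0, 1) = _
    rw [fderiv_clm_apply hd (differentiableAt_const _)]
    simp
  rw [e1, e2, hsymm]

lemma Ps_add {f g : ℝ×ℝ→ℝ} {p : ℝ×ℝ} (hf : DifferentiableAt ℝ f p)
    (hg : DifferentiableAt ℝ g p) : Ps (fun q => f q + g q) p = Ps f p + Ps g p := by
  unfold Ps; rw [fderiv_fun_add hf hg]; simp

lemma Pr_add {f g : ℝ×ℝ→ℝ} {p : ℝ×ℝ} (hf : DifferentiableAt ℝ f p)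
    (hg : DifferentiableAt ℝ g p) : Pr (fun q => f q + g q) p = Pr f p + Pr g p := by
  unfold Pr; rw [fderiv_fun_add hf hg]; simp

lemma Ps_sub {f g : ℝ×ℝ→ℝ} {p : ℝ×ℝ} (hf : DifferentiableAt ℝ f p)
    (hg : DifferentiableAt ℝ g p) : Ps (fun q => f q - g q) p = Ps f p - Ps g p := by
  unfold Ps; rw [fderiv_fun_sub hf hg]; simp

lemma Pr_sub {f g : ℝ×ℝ→ℝ} {p : ℝ×ℝ} (hf : DifferentiableAt ℝ f p)
    (hg : DifferentiableAt ℝ g p) : Pr (fun q => f q - g q) p = Pr f p - Pr g p := by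
  unfold Pr; rw [fderiv_fun_sub hf hg]; simp

lemma fderiv_snd_comp {ψ : ℝ → ℝ} {p : ℝ×ℝ} (hψ : DifferentiableAt ℝ ψ p.2) :
    HasFDerivAt (fun q : ℝ×ℝ => ψ q.2)
      ((deriv ψ p.2) • ContinuousLinearMap.snd ℝ ℝ ℝ) p :=
  hψ.hasDerivAt.comp_hasFDerivAt p hasFDerivAt_snd

lemma fderiv_fst_comp {φ : ℝ → ℝ} {p : ℝ×ℝ} (hφ : DifferentiableAt ℝ φ p.1) :
    HasFDerivAt (fun q : ℝ×ℝ => φ q.1)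
      ((deriv φ p.1) • ContinuousLinearMap.fst ℝ ℝ ℝ) p :=
  hφ.hasDerivAt.comp_hasFDerivAt p hasFDerivAt_fst

lemma Ps_mul_snd {ψ : ℝ→ℝ} {V : ℝ×ℝ→ℝ} {p : ℝ×ℝ} (hψ : DifferentiableAt ℝ ψ p.2)
    (hV : DifferentiableAt ℝ V p) :
    Ps (fun q => ψ q.2 * V q) p = ψ p.2 * Ps V p := by
  unfold Ps
  rw [fderiv_fun_mul ((fderiv_snd_comp hψ).differentiableAt) hV]
  rw [(fderiv_snd_comp hψ).fderiv]
  simp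

lemma Pr_mul_fst {φ : ℝ→ℝ} {V : ℝ×ℝ→ℝ} {p : ℝ×ℝ} (hφ : DifferentiableAt ℝ φ p.1)
    (hV : DifferentiableAt ℝ V p) :
    Pr (fun q => φ q.1 * V q) p = φ p.1 * Pr V p := by
  unfold Pr
  rw [fderiv_fun_mul ((fderiv_fst_comp hφ).differentiableAt) hV]
  rw [(fderiv_fst_comp hφ).fderiv]
  simp

noncomputable def coA (n : ℤ) (x : ℝ) : ℝ := ((n:ℝ) - 1) * (Real.cosh x / Real.sinh x)
noncomputable def coB (n k : ℤ) (x : ℝ) : ℝ := (k:ℝ) * ((k:ℝ) + (n:ℝ) - 2) / Real.sinh x ^ 2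

noncomputable def DS (n k : ℤ) (W : ℝ×ℝ→ℝ) : ℝ×ℝ→ℝ := fun p =>
  Ps (Ps W) p + coA n p.1 * Ps W p - coB n k p.1 * W p
noncomputable def DR (n : ℤ) (W : ℝ×ℝ→ℝ) : ℝ×ℝ→ℝ := fun p =>
  Pr (Pr W) p + coA n p.2 * Pr W p

lemma diffAt1 {O : Set ℝ} {f : ℝ→ℝ} (hO : IsOpen O)
    (hf : ContDiffOn ℝ (⊤:ℕ∞) f O) {x : ℝ} (hx : x ∈ O) : DifferentiableAt ℝ f x :=
  (hf.differentiableOn (by simp)).differentiableAt (hO.mem_nhds hx)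

lemma contDiffOn_coA (n : ℤ) : ContDiffOn ℝ (⊤:ℕ∞) (coA n) (Ioi 0) := by
  apply ContDiffOn.mul contDiffOn_const
  exact ContDiffOn.div Real.contDiff_cosh.contDiffOn Real.contDiff_sinh.contDiffOn
    (fun x hx => ne_of_gt (Real.sinh_pos_iff.mpr hx))

lemma contDiffOn_coB (n k : ℤ) : ContDiffOn ℝ (⊤:ℕ∞) (coB n k) (Ioi 0) := by
  apply ContDiffOn.div contDiffOn_const (Real.contDiff_sinh.contDiffOn.pow 2)
  intro x hx
  exact pow_ne_zero 2 (ne_of_gt (Real.sinh_pos_iff.mpr hx))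

lemma contDiffOn_DS {Ω : Set (ℝ×ℝ)} {W : ℝ×ℝ→ℝ} (n k : ℤ) (hΩ : IsOpen Ω)
    (hsub : ∀ p ∈ Ω, p.1 ∈ Ioi (0:ℝ)) (hW : ContDiffOn ℝ (⊤:ℕ∞) W Ω) :
    ContDiffOn ℝ (⊤:ℕ∞) (DS n k W) Ω := by
  have hA : ContDiffOn ℝ (⊤:ℕ∞) (fun p : ℝ×ℝ => coA n p.1) Ω :=
    (contDiffOn_coA n).comp contDiff_fst.contDiffOn hsub
  have hB : ContDiffOn ℝ (⊤:ℕ∞) (fun p : ℝ×ℝ => coB n k p.1) Ω :=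
    (contDiffOn_coB n k).comp contDiff_fst.contDiffOn hsub
  exact ((contDiffOn_Ps hΩ (contDiffOn_Ps hΩ hW)).add
    (hA.mul (contDiffOn_Ps hΩ hW))).sub (hB.mul hW)

lemma contDiffOn_DR {Ω : Set (ℝ×ℝ)} {W : ℝ×ℝ→ℝ} (n : ℤ) (hΩ : IsOpen Ω)
    (hsub : ∀ p ∈ Ω, p.2 ∈ Ioi (0:ℝ)) (hW : ContDiffOn ℝ (⊤:ℕ∞) W Ω) :
    ContDiffOn ℝ (⊤:ℕ∞) (DR n W) Ω := by
  have hA : ContDiffOn ℝ (⊤:ℕ∞) (fun p : ℝ×ℝ => coA n p.2) Ω :=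
    (contDiffOn_coA n).comp contDiff_snd.contDiffOn hsub
  exact (contDiffOn_Pr hΩ (contDiffOn_Pr hΩ hW)).add (hA.mul (contDiffOn_Pr hΩ hW))


lemma Dop_slice1 {Ω : Set (ℝ×ℝ)} {W : ℝ×ℝ→ℝ} (n k : ℤ) (hΩ : IsOpen Ω)
    (hW : ContDiffOn ℝ (⊤:ℕ∞) W Ω) {p : ℝ×ℝ} (hp : p ∈ Ω) :
    Dop n k (fun σ => W (σ, p.2)) p.1 = DS n k W p := by
  unfold Dop DS coA coB
  rw [deriv2_slice1 hΩ hW hp, deriv_slice1 hΩ hW hp]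

lemma Dop_slice2 {Ω : Set (ℝ×ℝ)} {W : ℝ×ℝ→ℝ} (n : ℤ) (hΩ : IsOpen Ω)
    (hW : ContDiffOn ℝ (⊤:ℕ∞) W Ω) {p : ℝ×ℝ} (hp : p ∈ Ω) :
    Dop n 0 (fun ρ => W (p.1, ρ)) p.2 = DR n W p := by
  unfold Dop DR coA
  rw [deriv2_slice2 hΩ hW hp, deriv_slice2 hΩ hW hp]
  norm_num

lemma DS_DR_comm {Ω : Set (ℝ×ℝ)} {W : ℝ×ℝ→ℝ} (n k : ℤ) (hΩ : IsOpen Ω)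
    (hs1 : ∀ p ∈ Ω, p.1 ∈ Ioi (0:ℝ)) (hs2 : ∀ p ∈ Ω, p.2 ∈ Ioi (0:ℝ))
    (hW : ContDiffOn ℝ (⊤:ℕ∞) W Ω) {p : ℝ×ℝ} (hp : p ∈ Ω) :
    DS n k (DR n W) p = DR n (DS n k W) p := by
  have hsW := contDiffOn_Ps hΩ hW
  have hrW := contDiffOn_Pr hΩ hW
  have hssW := contDiffOn_Ps hΩ hsW
  have hsrW := contDiffOn_Ps hΩ hrW
  have hrsW := contDiffOn_Pr hΩ hsW
  have hrrW := contDiffOn_Pr hΩ hrW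
  -- differentiability helpers
  have dA2 : ∀ q ∈ Ω, DifferentiableAt ℝ (fun q' : ℝ×ℝ => coA n q'.2) q := fun q hq =>
    (fderiv_snd_comp (diffAt1 isOpen_Ioi (contDiffOn_coA n) (hs2 q hq))).differentiableAt
  have dA1 : ∀ q ∈ Ω, DifferentiableAt ℝ (fun q' : ℝ×ℝ => coA n q'.1) q := fun q hq =>
    (fderiv_fst_comp (diffAt1 isOpen_Ioi (contDiffOn_coA n) (hs1 q hq))).differentiableAt
  have dB1 : ∀ q ∈ Ω, DifferentiableAt ℝ (fun q' : ℝ×ℝ => coB n k q'.1) q := fun q hq =>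
    (fderiv_fst_comp (diffAt1 isOpen_Ioi (contDiffOn_coB n k) (hs1 q hq))).differentiableAt
  -- A1 : Ps (DR n W) on Ω
  have A1 : ∀ q ∈ Ω, Ps (DR n W) q = Ps (Pr (Pr W)) q + coA n q.2 * Ps (Pr W) q := by
    intro q hq
    have : Ps (DR n W) q = Ps (fun q' => Pr (Pr W) q' + coA n q'.2 * Pr W q') q := rfl
    rw [this, Ps_add (diffAt hΩ hrrW hq) ((dA2 q hq).fun_mul (diffAt hΩ hrW hq)),
      Ps_mul_snd (diffAt1 isOpen_Ioi (contDiffOn_coA n) (hs2 q hq)) (diffAt hΩ hrW hq)]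
  -- A2 : Ps (Ps (DR n W)) at p
  have A2 : Ps (Ps (DR n W)) p
      = Ps (Ps (Pr (Pr W))) p + coA n p.2 * Ps (Ps (Pr W)) p := by
    rw [Ps_congr hΩ A1 hp,
      Ps_add (diffAt hΩ (contDiffOn_Ps hΩ hrrW) hp)
        ((dA2 p hp).fun_mul (diffAt hΩ (contDiffOn_Ps hΩ hrW) hp)),
      Ps_mul_snd (diffAt1 isOpen_Ioi (contDiffOn_coA n) (hs2 p hp))
        (diffAt hΩ (contDiffOn_Ps hΩ hrW) hp)]
  -- B1 : Pr (DS n k W) on Ω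
  have B1 : ∀ q ∈ Ω, Pr (DS n k W) q
      = Pr (Ps (Ps W)) q + coA n q.1 * Pr (Ps W) q - coB n k q.1 * Pr W q := by
    intro q hq
    have : Pr (DS n k W) q
        = Pr (fun q' => (Ps (Ps W) q' + coA n q'.1 * Ps W q') - coB n k q'.1 * W q') q := rfl
    rw [this, Pr_sub ((diffAt hΩ hssW hq).fun_add ((dA1 q hq).fun_mul (diffAt hΩ hsW hq)))
        ((dB1 q hq).fun_mul (diffAt hΩ hW hq)),
      Pr_add (diffAt hΩ hssW hq) ((dA1 q hq).fun_mul (diffAt hΩ hsW hq)),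
      Pr_mul_fst (diffAt1 isOpen_Ioi (contDiffOn_coA n) (hs1 q hq)) (diffAt hΩ hsW hq),
      Pr_mul_fst (diffAt1 isOpen_Ioi (contDiffOn_coB n k) (hs1 q hq)) (diffAt hΩ hW hq)]
  -- B2 : Pr (Pr (DS n k W)) at p
  have B2 : Pr (Pr (DS n k W)) p
      = Pr (Pr (Ps (Ps W))) p + coA n p.1 * Pr (Pr (Ps W)) p - coB n k p.1 * Pr (Pr W) p := by
    rw [Pr_congr hΩ B1 hp,
      Pr_sub ((diffAt hΩ (contDiffOn_Pr hΩ hssW) hp).fun_add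
          ((dA1 p hp).fun_mul (diffAt hΩ (contDiffOn_Pr hΩ hsW) hp)))
        ((dB1 p hp).fun_mul (diffAt hΩ hrW hp)),
      Pr_add (diffAt hΩ (contDiffOn_Pr hΩ hssW) hp)
        ((dA1 p hp).fun_mul (diffAt hΩ (contDiffOn_Pr hΩ hsW) hp)),
      Pr_mul_fst (diffAt1 isOpen_Ioi (contDiffOn_coA n) (hs1 p hp))
        (diffAt hΩ (contDiffOn_Pr hΩ hsW) hp),
      Pr_mul_fst (diffAt1 isOpen_Ioi (contDiffOn_coB n k) (hs1 p hp)) (diffAt hΩ hrW hp)]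
  -- symmetry swaps
  have S1 : Ps (Pr W) p = Pr (Ps W) p := Ps_Pr_symm hΩ hW hp
  have S2fun : ∀ q ∈ Ω, Ps (Pr (Pr W)) q = Pr (Pr (Ps W)) q := by
    intro q hq
    rw [Ps_Pr_symm hΩ hrW hq]
    exact Pr_congr hΩ (fun q' hq' => Ps_Pr_symm hΩ hW hq') hq
  have S3 : Ps (Ps (Pr (Pr W))) p = Pr (Pr (Ps (Ps W))) p := by
    rw [Ps_congr hΩ S2fun hp, Ps_Pr_symm hΩ hrsW hp]
    exact Pr_congr hΩ (fun q hq => Ps_Pr_symm hΩ hsW hq) hp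
  have S4 : Ps (Ps (Pr W)) p = Pr (Ps (Ps W)) p := by
    rw [Ps_congr hΩ (fun q hq => Ps_Pr_symm hΩ hW hq) hp]
    exact Ps_Pr_symm hΩ hsW hp
  have S5 : Ps (Pr (Pr W)) p = Pr (Pr (Ps W)) p := S2fun p hp
  -- assemble
  have hDR : DR n W p = Pr (Pr W) p + coA n p.2 * Pr W p := rfl
  have hDS : DS n k W p = Ps (Ps W) p + coA n p.1 * Ps W p - coB n k p.1 * W p := rfl
  show Ps (Ps (DR n W)) p + coA n p.1 * Ps (DR n W) p - coB n k p.1 * DR n W p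
     = Pr (Pr (DS n k W)) p + coA n p.2 * Pr (DS n k W) p
  rw [A2, A1 p hp, B2, B1 p hp, hDR, S3, S4, S5, S1]
  ring

lemma Dop_congr (n k : ℤ) {f g : ℝ→ℝ} {O : Set ℝ} (hO : IsOpen O)
    (h : ∀ x ∈ O, f x = g x) {x : ℝ} (hx : x ∈ O) : Dop n k f x = Dop n k g x := by
  have h1 : ∀ y ∈ O, deriv f y = deriv g y := fun y hy =>
    Filter.EventuallyEq.deriv_eq (Filter.eventuallyEq_of_mem (hO.mem_nhds hy) h)
  unfold Dop
  rw [h x hx, h1 x hx,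
    Filter.EventuallyEq.deriv_eq (Filter.eventuallyEq_of_mem (hO.mem_nhds hx) h1)]

lemma DS_congr {Ω : Set (ℝ×ℝ)} {V V' : ℝ×ℝ→ℝ} (n k : ℤ) (hΩ : IsOpen Ω)
    (h : ∀ q ∈ Ω, V q = V' q) {p : ℝ×ℝ} (hp : p ∈ Ω) : DS n k V p = DS n k V' p := by
  unfold DS
  rw [Ps_congr hΩ h hp, Ps_congr (V := Ps V) hΩ (fun q hq => Ps_congr hΩ h hq) hp, h p hp]

lemma DR_congr {Ω : Set (ℝ×ℝ)} {V V' : ℝ×ℝ→ℝ} (n : ℤ) (hΩ : IsOpen Ω)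
    (h : ∀ q ∈ Ω, V q = V' q) {p : ℝ×ℝ} (hp : p ∈ Ω) : DR n V p = DR n V' p := by
  unfold DR
  rw [Pr_congr hΩ h hp, Pr_congr (V := Pr V) hΩ (fun q hq => Pr_congr hΩ h hq) hp]

/-- Lemma `L:D_m`: if `U` is smooth and satisfies `𝒟_{m,s} U = 𝒟_{0,r} U` on
    `(0,R] × (0,∞)`, and `g(r) = U(R,r)` vanishes up to infinite order at `r = 0`,
    then `F(s) = U(s,0)` satisfies `𝒟_m^l F (R) = 0` for every `l ≥ 0`. -/
theorem stmt_13 (n : ℤ) (hn : 2 ≤ n) (m : ℕ) (R : ℝ) (hR : 0 < R)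
    (U : ℝ → ℝ → ℝ) (hU : ContDiff ℝ (⊤ : ℕ∞) (fun p : ℝ × ℝ => U p.1 p.2))
    (hPDE : ∀ s ∈ Set.Ioc (0 : ℝ) R, ∀ r ∈ Set.Ioi (0 : ℝ),
      Dop n (m : ℤ) (fun σ => U σ r) s = Dop n 0 (fun ρ => U s ρ) r)
    (hg : ∀ k : ℕ, iteratedDeriv k (fun r => U R r) 0 = 0) :
    ∀ l : ℕ, (Dop n (m : ℤ))^[l] (fun s => U s 0) R = 0 := by
  intro l
  have hWc : ContDiff ℝ (⊤:ℕ∞) (fun p : ℝ × ℝ => U p.1 p.2) := hU.of_le (by simp)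
  set W : ℝ × ℝ → ℝ := fun p => U p.1 p.2 with hWdef
  set ΩA : Set (ℝ×ℝ) := Ioi 0 ×ˢ (univ : Set ℝ) with hΩA
  set ΩB : Set (ℝ×ℝ) := (univ : Set ℝ) ×ˢ Ioi 0 with hΩB
  set ΩP : Set (ℝ×ℝ) := Ioo 0 R ×ˢ Ioi 0 with hΩP
  have hOA : IsOpen ΩA := isOpen_Ioi.prod isOpen_univ
  have hOB : IsOpen ΩB := isOpen_univ.prod isOpen_Ioi
  have hOP : IsOpen ΩP := isOpen_Ioo.prod isOpen_Ioi
  have hPA : ∀ p ∈ ΩA, p.1 ∈ Ioi (0:ℝ) := fun p hp => hp.1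
  have hPB : ∀ p ∈ ΩB, p.2 ∈ Ioi (0:ℝ) := fun p hp => hp.2
  have hP1 : ∀ p ∈ ΩP, p.1 ∈ Ioi (0:ℝ) := fun p hp => hp.1.1
  have hP2 : ∀ p ∈ ΩP, p.2 ∈ Ioi (0:ℝ) := fun p hp => hp.2
  have hPsubA : ΩP ⊆ ΩA := Set.prod_mono Ioo_subset_Ioi_self (subset_univ _)
  have hPsubB : ΩP ⊆ ΩB := Set.prod_mono (subset_univ _) subset_rfl
  have iterA : ∀ j : ℕ, ContDiffOn ℝ (⊤:ℕ∞) ((DS n (m:ℤ))^[j] W) ΩA := by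
    intro j; induction j with
    | zero => exact hWc.contDiffOn
    | succ j ih =>
      rw [Function.iterate_succ_apply']
      exact contDiffOn_DS n (m:ℤ) hOA hPA ih
  have iterB : ∀ j : ℕ, ContDiffOn ℝ (⊤:ℕ∞) ((DR n)^[j] W) ΩB := by
    intro j; induction j with
    | zero => exact hWc.contDiffOn
    | succ j ih =>
      rw [Function.iterate_succ_apply']
      exact contDiffOn_DR n hOB hPB ih
  have hPDE' : ∀ p ∈ ΩP, DS n (m:ℤ) W p = DR n W p := by
    intro p hp
    have h := hPDE p.1 ⟨hp.1.1, hp.1.2.le⟩ p.2 hp.2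
    rw [← Dop_slice1 n (m:ℤ) isOpen_univ hWc.contDiffOn (mem_univ p),
      ← Dop_slice2 n isOpen_univ hWc.contDiffOn (mem_univ p)]
    exact h
  have comm : ∀ j : ℕ, ∀ p ∈ ΩP, DS n (m:ℤ) ((DR n)^[j] W) p = DR n ((DR n)^[j] W) p := by
    intro j; induction j with
    | zero => exact hPDE'
    | succ j ih =>
      intro p hp
      rw [Function.iterate_succ_apply']
      rw [DS_DR_comm n (m:ℤ) hOP hP1 hP2 ((iterB j).mono hPsubB) hp]
      exact DR_congr n hOP ih hp
  have hAB : ∀ j : ℕ, ∀ p ∈ ΩP, (DS n (m:ℤ))^[j] W p = (DR n)^[j] W p := by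
    intro j; induction j with
    | zero => intro p _; rfl
    | succ j ih =>
      intro p hp
      rw [Function.iterate_succ_apply', Function.iterate_succ_apply']
      rw [DS_congr n (m:ℤ) hOP ih hp]
      exact comm j p hp
  have hcl : ∀ r ∈ Ioi (0:ℝ), ((R:ℝ), r) ∈ closure ΩP := by
    intro r hr
    rw [hΩP, closure_prod_eq, closure_Ioo (ne_of_lt hR), closure_Ioi]
    exact ⟨⟨hR.le, le_rfl⟩, Set.mem_Ici.mpr (le_of_lt hr)⟩
  have hRr : ∀ j : ℕ, ∀ r ∈ Ioi (0:ℝ),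
      (DS n (m:ℤ))^[j] W (R, r) = (DR n)^[j] W (R, r) := by
    intro j r hr
    have hne : (nhdsWithin ((R:ℝ), r) ΩP).NeBot :=
      mem_closure_iff_nhdsWithin_neBot.mp (hcl r hr)
    have tA : Filter.Tendsto ((DS n (m:ℤ))^[j] W) (nhdsWithin ((R:ℝ), r) ΩP)
        (nhds ((DS n (m:ℤ))^[j] W (R, r))) :=
      (((iterA j).continuousOn.continuousAt
        (hOA.mem_nhds ⟨mem_Ioi.mpr hR, mem_univ _⟩)).tendsto).mono_left nhdsWithin_le_nhds
    have tB : Filter.Tendsto ((DR n)^[j] W) (nhdsWithin ((R:ℝ), r) ΩP)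
        (nhds ((DR n)^[j] W (R, r))) :=
      (((iterB j).continuousOn.continuousAt
        (hOB.mem_nhds ⟨mem_univ _, hr⟩)).tendsto).mono_left nhdsWithin_le_nhds
    have ev : (DS n (m:ℤ))^[j] W =ᶠ[nhdsWithin ((R:ℝ), r) ΩP] (DR n)^[j] W :=
      Filter.eventuallyEq_of_mem self_mem_nhdsWithin (hAB j)
    exact tendsto_nhds_unique tA (tB.congr' ev.symm)
  have hBslice : ∀ j : ℕ, ∀ r ∈ Ioi (0:ℝ),
      (DR n)^[j] W (R, r) = (Dop n 0)^[j] (fun r => U R r) r := by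
    intro j; induction j with
    | zero => intro r _; rfl
    | succ j ih =>
      intro r hr
      rw [Function.iterate_succ_apply', Function.iterate_succ_apply']
      have h1 : Dop n 0 (fun ρ => (DR n)^[j] W (R, ρ)) r = DR n ((DR n)^[j] W) (R, r) :=
        Dop_slice2 n hOB (iterB j) (⟨mem_univ _, hr⟩ : ((R:ℝ), r) ∈ ΩB)
      rw [← h1]
      exact Dop_congr n 0 isOpen_Ioi ih hr
  have hgc : ContDiff ℝ (⊤:ℕ∞) (fun r => U R r) :=
    hWc.comp (contDiff_const.prodMk contDiff_id)
  have tendA : Filter.Tendsto (fun r => (DS n (m:ℤ))^[l] W (R, r))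
      (nhdsWithin 0 (Ioi 0)) (nhds ((DS n (m:ℤ))^[l] W (R, 0))) := by
    have hct : ContinuousAt ((DS n (m:ℤ))^[l] W) ((R:ℝ), (0:ℝ)) :=
      (iterA l).continuousOn.continuousAt (hOA.mem_nhds ⟨mem_Ioi.mpr hR, mem_univ _⟩)
    exact ((hct.comp
      ((continuous_const.prodMk continuous_id).continuousAt)).tendsto).mono_left
      nhdsWithin_le_nhds
  have ev0 : (fun r => (DS n (m:ℤ))^[l] W (R, r))
      =ᶠ[nhdsWithin 0 (Ioi 0)] ((Dop n 0)^[l] (fun r => U R r)) :=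
    Filter.eventuallyEq_of_mem self_mem_nhdsWithin
      (fun r hr => (hRr l r hr).trans (hBslice l r hr))
  have hA0 : (DS n (m:ℤ))^[l] W (R, 0) = 0 :=
    tendsto_nhds_unique (tendA.congr' ev0) (rside n hgc hg l)
  have hsgoal : ∀ j : ℕ, ∀ s ∈ Ioi (0:ℝ),
      (Dop n (m:ℤ))^[j] (fun s => U s 0) s = (DS n (m:ℤ))^[j] W (s, 0) := by
    intro j; induction j with
    | zero => intro s _; rfl
    | succ j ih =>
      intro s hs
      rw [Function.iterate_succ_apply', Function.iterate_succ_apply']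
      have h1 : Dop n (m:ℤ) (fun σ => (DS n (m:ℤ))^[j] W (σ, 0)) s
          = DS n (m:ℤ) ((DS n (m:ℤ))^[j] W) (s, 0) :=
        Dop_slice1 n (m:ℤ) hOA (iterA j) (⟨hs, mem_univ _⟩ : ((s:ℝ), (0:ℝ)) ∈ ΩA)
      rw [← h1]
      exact Dop_congr n (m:ℤ) isOpen_Ioi ih hs
  rw [hsgoal l R (mem_Ioi.mpr hR), hA0]
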